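/- arXiv:2209.00573 — 3 statements merged into one kernel-verified Lean document; each statement's English description precedes it below -/
import Mathlib

section
/- Let M = (S, A, s0, P) be a finite MDP and φ = ¬U 𝖴 F a reach-avoid objective with U, F ⊆ S disjoint. Then a state s ∈ ASW(φ) if and only if there exists a ranking witness (W, r) for φ with s ∈ W. -/
open scoped BigOperators Classical

/-- A finite Markov decision process: finite state set `S`, finite action set `A`,
nonempty enabled-action sets, an initial state, and a transition kernel that is a
probability distribution on `S` for every state and enabled action. -/
structure MDP (S A : Type) [Fintype S] [Fintype A] where
  act : S → Finset A
  act_nonempty : ∀ s, (act s).Nonempty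
  init : S
  P : S → A → S → ℝ
  P_nonneg : ∀ s a s', 0 ≤ P s a s'
  P_sum_one : ∀ s, ∀ a ∈ act s, (∑ s', P s a s') = 1

variable {S A : Type} [Fintype S] [Fintype A]

/-- `Post(s,a)`: states reachable with positive probability. -/
def post (M : MDP S A) (s : S) (a : A) : Set S := {s' | 0 < M.P s a s'}

/-- The last state of a history `(s, l)` (state `s` followed by action-state steps `l`). -/
def lastState (s : S) (l : List (A × S)) : S :=
  (l.getLast?.map Prod.snd).getD s

/-- `(s, l)` is a (valid) history of `M`: each action is enabled and each transition
has positive probability. -/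
def isHist (M : MDP S A) : S → List (A × S) → Prop
  | _, [] => True
  | s, (a, s') :: rest => a ∈ M.act s ∧ 0 < M.P s a s' ∧ isHist M s' rest

/-- The `i`-th state of the history `(s, l)`. -/
def stateAt (s : S) (l : List (A × S)) : ℕ → S
  | 0 => s
  | i + 1 => ((l[i]?).map Prod.snd).getD s

/-- `Occ(h)`: the set of states occurring in the history `(s, l)`. -/
def occ (s : S) (l : List (A × S)) : Set S :=
  insert s {t | t ∈ l.map Prod.snd}

/-- The history `(s, l)` satisfies the reach-avoid objective `¬U 𝖴 F`. -/
def satRA (U F : Set S) (s : S) (l : List (A × S)) : Prop :=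
  ∃ k ≤ l.length, stateAt s l k ∈ F ∧ ∀ i < k, stateAt s l i ∉ U ∪ F

/-- Probability of the continuation `l` of the history `(s0, pre)` under strategy `π`. -/
noncomputable def prFrom (M : MDP S A) (π : S → List (A × S) → A → ℝ) :
    S → List (A × S) → List (A × S) → ℝ
  | _, _, [] => 1
  | s0, pre, (a, s') :: rest =>
      π s0 pre a * M.P (lastState s0 pre) a s' * prFrom M π s0 (pre ++ [(a, s')]) rest

/-- `Pr(h; M_π)`: the probability of the history `h = (s, l)` under strategy `π`. -/
noncomputable def prHist (M : MDP S A) (π : S → List (A × S) → A → ℝ)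
    (s : S) (l : List (A × S)) : ℝ :=
  prFrom M π s [] l

/-- A (randomized, history-dependent) strategy: maps each history to a probability
distribution over the actions enabled at its last state. -/
structure Strategy (M : MDP S A) where
  toFun : S → List (A × S) → A → ℝ
  nonneg : ∀ s l a, 0 ≤ toFun s l a
  sum_one : ∀ s l, (∑ a, toFun s l a) = 1
  support_mem : ∀ s l a, 0 < toFun s l a → a ∈ M.act (lastState s l)

/-- A (randomized) Markov strategy: maps each state to a probability distribution over
the actions enabled at that state. -/
structure MarkovStrategy (M : MDP S A) where
  toFun : S → A → ℝ
  nonneg : ∀ s a, 0 ≤ toFun s a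
  sum_one : ∀ s, (∑ a, toFun s a) = 1
  support_mem : ∀ s a, 0 < toFun s a → a ∈ M.act s

/-- The history-dependent strategy induced by a Markov strategy. -/
def MarkovStrategy.strat {M : MDP S A} (σ : MarkovStrategy M) : Strategy M where
  toFun s l a := σ.toFun (lastState s l) a
  nonneg s l a := σ.nonneg _ a
  sum_one s l := σ.sum_one _
  support_mem s l a h := σ.support_mem _ a h

/-- Sum of `Pr(h; M_π)` over all histories `h` of length `n` starting at `s` that
satisfy the reach-avoid objective `¬U 𝖴 F`. -/
noncomputable def satProbN (M : MDP S A) (π : S → List (A × S) → A → ℝ)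
    (U F : Set S) (s : S) (n : ℕ) : ℝ :=
  ∑ f : Fin n → A × S,
    if isHist M s (List.ofFn f) ∧ satRA U F s (List.ofFn f)
    then prHist M π s (List.ofFn f) else 0

/-- `Pr_s(¬U 𝖴 F; M_π)`: supremum over `n` of `satProbN`. -/
noncomputable def prSat (M : MDP S A) (π : S → List (A × S) → A → ℝ)
    (U F : Set S) (s : S) : ℝ :=
  ⨆ n : ℕ, satProbN M π U F s n

/-- The almost-sure winning region `ASW(¬U 𝖴 F)`. -/
def ASW (M : MDP S A) (U F : Set S) : Set S :=
  {s | ∃ π : Strategy M, prSat M π.toFun U F s = 1}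

/-- `Allowed(s)`: enabled actions keeping the agent inside `ASW(¬U 𝖴 F)`
(empty for `s ∉ ASW(¬U 𝖴 F)`). -/
def allowed (M : MDP S A) (U F : Set S) (s : S) : Set A :=
  {a | s ∈ ASW M U F ∧ a ∈ M.act s ∧ post M s a ⊆ ASW M U F}

/-- A defender state-observation function: observation-equivalence classes partition the
state space and observation-equivalent states have the same enabled actions. -/
structure ObsFun (M : MDP S A) where
  obs : S → Set S
  mem_self : ∀ s, s ∈ obs s
  eq_of_mem : ∀ s s', s' ∈ obs s → obs s' = obs s
  act_eq : ∀ s s', s' ∈ obs s → M.act s' = M.act s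

/-- Action-visible belief update `Update_v(B, a, s'')`. -/
def updateV (M : MDP S A) (O : ObsFun M) (U0 F0 : Set S)
    (B : Set S) (a : A) (s'' : S) : Set S :=
  {s' | ∃ so ∈ B, a ∈ allowed M U0 F0 so ∧ s' ∈ post M so a ∧ O.obs s' = O.obs s''}

/-- Action-invisible belief update `Update_inv(B, s'')`. -/
def updateInv (M : MDP S A) (O : ObsFun M) (U0 F0 : Set S)
    (B : Set S) (s'' : S) : Set S :=
  {s' | ∃ so ∈ B, ∃ ao ∈ allowed M U0 F0 so, s' ∈ post M so ao ∧ O.obs s' = O.obs s''}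

/-- The unsafe set `U~1 = {(s,B) : s ∈ U1, B ≠ ∅} ∪ {(s,∅) : s ∈ S}` of the
augmented MDP. -/
def augU (U1 : Set S) : Set (S × Set S) :=
  {p | (p.1 ∈ U1 ∧ p.2 ≠ ∅) ∨ p.2 = ∅}

/-- The target set `F~1 = F1 × (2^S \ {∅})` of the augmented MDP. -/
def augF (F1 : Set S) : Set (S × Set S) :=
  {p | p.1 ∈ F1 ∧ p.2 ≠ ∅}

/-- The action-visible augmented MDP `M~`. -/
noncomputable def augV (M : MDP S A) (O : ObsFun M) (U0 F0 : Set S) :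
    MDP (S × Set S) A where
  act p := M.act p.1
  act_nonempty p := M.act_nonempty p.1
  init := (M.init, O.obs M.init)
  P p a q :=
    if p.2.Nonempty ∧ ∃ so ∈ p.2, a ∈ allowed M U0 F0 so then
      (if q.2 = updateV M O U0 F0 p.2 a q.1 then M.P p.1 a q.1 else 0)
    else (if q = (p.1, (∅ : Set S)) then 1 else 0)
  P_nonneg := by
    intro p a q
    try dsimp only
    split_ifs <;> first | exact M.P_nonneg _ _ _ | norm_num
  P_sum_one := by
    intro p a ha
    by_cases hc : p.2.Nonempty ∧ ∃ so ∈ p.2, a ∈ allowed M U0 F0 so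
    · simp only [if_pos hc]
      rw [Fintype.sum_prod_type]
      have : ∀ t : S,
          (∑ C : Set S, if C = updateV M O U0 F0 p.2 a t then M.P p.1 a t else 0)
            = M.P p.1 a t := by
        intro t
        simp [Finset.sum_ite_eq']
      simp only [this]
      exact M.P_sum_one p.1 a ha
    · simp only [if_neg hc]
      simp [Finset.sum_ite_eq']

/-- The action-invisible augmented MDP `M^`. -/
noncomputable def augInv (M : MDP S A) (O : ObsFun M) (U0 F0 : Set S) :
    MDP (S × Set S) A where
  act p := M.act p.1
  act_nonempty p := M.act_nonempty p.1
  init := (M.init, O.obs M.init)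
  P p a q :=
    if (∃ so ∈ p.2, a ∈ allowed M U0 F0 so) ∧ a ∈ M.act p.1 then
      (if q.2 = updateInv M O U0 F0 p.2 q.1 then M.P p.1 a q.1 else 0)
    else (if q = (p.1, (∅ : Set S)) then 1 else 0)
  P_nonneg := by
    intro p a q
    try dsimp only
    split_ifs <;> first | exact M.P_nonneg _ _ _ | norm_num
  P_sum_one := by
    intro p a ha
    by_cases hc : (∃ so ∈ p.2, a ∈ allowed M U0 F0 so) ∧ a ∈ M.act p.1
    · simp only [if_pos hc]
      rw [Fintype.sum_prod_type]
      have : ∀ t : S,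
          (∑ C : Set S, if C = updateInv M O U0 F0 p.2 t then M.P p.1 a t else 0)
            = M.P p.1 a t := by
        intro t
        simp [Finset.sum_ite_eq']
      simp only [this]
      exact M.P_sum_one p.1 a ha
    · simp only [if_neg hc]
      simp [Finset.sum_ite_eq']

/-- The defender's belief after observing (states and actions of) the history `(s0, l)`,
for an action-visible defender: `B0 = DObs_S(s0)`, `B(i+1) = Update_v(Bi, ai, s(i+1))`. -/
def beliefV (M : MDP S A) (O : ObsFun M) (U0 F0 : Set S)
    (s0 : S) (l : List (A × S)) : Set S :=
  l.foldl (fun B p => updateV M O U0 F0 B p.1 p.2) (O.obs s0)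

/-- The defender's belief after observing (the states of) the history `(s0, l)`,
for an action-invisible defender: `B0 = DObs_S(s0)`, `B(i+1) = Update_inv(Bi, s(i+1))`. -/
def beliefInv (M : MDP S A) (O : ObsFun M) (U0 F0 : Set S)
    (s0 : S) (l : List (A × S)) : Set S :=
  l.foldl (fun B p => updateInv M O U0 F0 B p.2) (O.obs s0)

/-- The finite-memory strategy on `M` induced by a Markov strategy of the action-visible
augmented MDP `M~`. -/
noncomputable def inducedV (M : MDP S A) (O : ObsFun M) (U0 F0 : Set S)
    (σ : MarkovStrategy (augV M O U0 F0)) : Strategy M where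
  toFun s l a := σ.toFun (lastState s l, beliefV M O U0 F0 s l) a
  nonneg s l a := σ.nonneg _ a
  sum_one s l := σ.sum_one _
  support_mem s l a h := σ.support_mem _ a h

/-- The finite-memory strategy on `M` induced by a Markov strategy of the
action-invisible augmented MDP `M^`. -/
noncomputable def inducedInv (M : MDP S A) (O : ObsFun M) (U0 F0 : Set S)
    (σ : MarkovStrategy (augInv M O U0 F0)) : Strategy M where
  toFun s l a := σ.toFun (lastState s l, beliefInv M O U0 F0 s l) a
  nonneg s l a := σ.nonneg _ a
  sum_one s l := σ.sum_one _
  support_mem s l a h := σ.support_mem _ a h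

/-- A ranking witness `(W, r)` for the reach-avoid objective `¬U 𝖴 F`. -/
def rankWitness (M : MDP S A) (U F : Set S) (W : Set S) (r : S → ℕ) : Prop :=
  W ∩ U = ∅ ∧
  ∀ s ∈ W \ F, ∃ a ∈ M.act s, post M s a ⊆ W ∧
    (post M s a ∩ {t ∈ W | r t < r s}).Nonempty

/-!
Given a ranking witness `(W, r)`, play the witnessing actions memorylessly. On `W \ F` the
winning probability `Q` of this strategy is the average of `Q` over the successors, which lie in
`W`. A minimizer of `Q` on `W` of least rank cannot lie outside `F`, because it has a
successor of lower rank, where `Q` is then strictly larger; hence `min_W Q = 1`.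

Conversely, an almost-sure winning strategy plays, outside `F`, only actions all of whose
successors are almost-sure winning. A state of `ASW` outside the positive attractor of `F` inside
`ASW` therefore has all its successors reached with positive probability outside the attractor
as well, so from it `F` is reached with probability `0`. Thus the attractor covers `ASW`, and the
attractor level is a rank on `ASW`.
-/

theorem lastState_cons {S A : Type} (s t : S) (a : A) (l : List (A × S)) :
    lastState s ((a, t) :: l) = lastState t l := by
  cases l <;> simp [lastState, List.getLast?_cons]

section Histories

variable {M : MDP S A}

/-- `π` continued after a first step from `s` with action `a`, as a strategy from the next
state. -/
def Strategy.shift (π : Strategy M) (s : S) (a : A) : Strategy M where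
  toFun t l := π.toFun s ((a, t) :: l)
  nonneg t l := π.nonneg s ((a, t) :: l)
  sum_one t l := π.sum_one s ((a, t) :: l)
  support_mem t l b hb := lastState_cons s t a l ▸ π.support_mem s ((a, t) :: l) b hb

theorem prFrom_cons_prefix (π : Strategy M) (s t : S) (a : A) (l : List (A × S)) :
    ∀ pre, prFrom M π.toFun s ((a, t) :: pre) l = prFrom M (π.shift s a).toFun t pre l := by
  induction l with
  | nil => intro pre; rfl
  | cons p rest ih =>
    intro pre
    simp only [prFrom, lastState_cons, List.cons_append, ih]
    rfl

theorem prHist_cons (π : Strategy M) (s t : S) (a : A) (l : List (A × S)) :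
    prHist M π.toFun s ((a, t) :: l) =
      π.toFun s [] a * M.P s a t * prHist M (π.shift s a).toFun t l :=
  congrArg (π.toFun s [] a * M.P s a t * ·) (prFrom_cons_prefix π s t a l [])

theorem prFrom_nonneg (π : Strategy M) (s : S) (l : List (A × S)) :
    ∀ pre, 0 ≤ prFrom M π.toFun s pre l := by
  induction l with
  | nil => intro _; exact zero_le_one
  | cons p rest ih =>
    intro pre
    exact mul_nonneg (mul_nonneg (π.nonneg _ _ _) (M.P_nonneg _ _ _)) (ih _)

end Histories

section Objective

variable {S A : Type} {U F : Set S}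

theorem stateAt_cons_succ (s t : S) (a : A) {l : List (A × S)} {j : ℕ} (hj : j ≤ l.length) :
    stateAt s ((a, t) :: l) (j + 1) = stateAt t l j := by
  cases j with
  | zero => rfl
  | succ i => simp [stateAt, List.getElem?_eq_getElem (show i < l.length by omega)]

theorem satRA_of_mem_F {s : S} (hs : s ∈ F) (l : List (A × S)) : satRA U F s l :=
  ⟨0, Nat.zero_le _, hs, fun _ hi => absurd hi (Nat.not_lt_zero _)⟩

theorem not_satRA_nil {s : S} (hs : s ∉ F) : ¬ satRA U F s ([] : List (A × S)) := by
  rintro ⟨k, hk, hF, -⟩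
  obtain rfl : k = 0 := Nat.le_zero.mp hk
  exact hs hF

theorem not_satRA_of_mem_U {s : S} (hU : s ∈ U) (hF : s ∉ F) (l : List (A × S)) :
    ¬ satRA U F s l := by
  rintro ⟨_ | k, -, hk, hbefore⟩
  · exact hF hk
  · exact hbefore 0 k.succ_pos (Or.inl hU)

theorem satRA_cons {s : S} (hs : s ∉ U ∪ F) (t : S) (a : A) (l : List (A × S)) :
    satRA U F s ((a, t) :: l) ↔ satRA U F t l := by
  constructor
  · rintro ⟨_ | k, hk, hF, hbefore⟩
    · exact absurd (Or.inr hF) hs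
    · have hk : k ≤ l.length := by simpa using hk
      refine ⟨k, hk, stateAt_cons_succ s t a hk ▸ hF, fun i hi => ?_⟩
      rw [← stateAt_cons_succ s t a (hi.le.trans hk)]
      exact hbefore (i + 1) (by omega)
  · rintro ⟨k, hk, hF, hbefore⟩
    refine ⟨k + 1, by simpa using hk, (stateAt_cons_succ s t a hk).symm ▸ hF, ?_⟩
    rintro (_ | i) hi
    · exact hs
    · rw [stateAt_cons_succ s t a (by omega)]
      exact hbefore i (by omega)

end Objective

section Mass

variable {M : MDP S A}

/-- `satProbN M π.toFun U F` is `histMass π (satRA U F)` by definition. -/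
noncomputable def histMass (π : Strategy M) (Φ : S → List (A × S) → Prop) (s : S) (n : ℕ) : ℝ :=
  ∑ f : Fin n → A × S,
    if isHist M s (List.ofFn f) ∧ Φ s (List.ofFn f) then prHist M π.toFun s (List.ofFn f) else 0

theorem Strategy.toFun_eq_zero_of_notMem (π : Strategy M) {s : S} {a : A} (ha : a ∉ M.act s) :
    π.toFun s [] a = 0 :=
  le_antisymm (not_lt.mp fun h => ha (π.support_mem s [] a h)) (π.nonneg s [] a)

theorem Strategy.sum_sum_mul_P (π : Strategy M) (s : S) :
    ∑ a, ∑ t, π.toFun s [] a * M.P s a t = 1 := by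
  simp_rw [← Finset.mul_sum]
  rw [← π.sum_one s []]
  refine Finset.sum_congr rfl fun a _ => ?_
  by_cases ha : a ∈ M.act s
  · rw [M.P_sum_one s a ha, mul_one]
  · rw [π.toFun_eq_zero_of_notMem ha, zero_mul]

theorem histMass_succ (π : Strategy M) {Φ : S → List (A × S) → Prop} {s : S}
    (hΦ : ∀ a t l, Φ s ((a, t) :: l) ↔ Φ t l) (n : ℕ) :
    histMass π Φ s (n + 1) =
      ∑ a, ∑ t, π.toFun s [] a * M.P s a t * histMass (π.shift s a) Φ t n := by
  rw [histMass, ← (Fin.consEquiv fun _ : Fin (n + 1) => A × S).sum_comp (M := ℝ),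
    Fintype.sum_prod_type, Fintype.sum_prod_type]
  refine Finset.sum_congr rfl fun a _ => Finset.sum_congr rfl fun t _ => ?_
  rw [histMass, Finset.mul_sum]
  refine Finset.sum_congr rfl fun f _ => ?_
  have hofFn : List.ofFn ((Fin.consEquiv fun _ => A × S) ((a, t), f)) = (a, t) :: List.ofFn f := by
    simp [Fin.consEquiv, List.ofFn_succ]
  simp only [hofFn, isHist, hΦ, prHist_cons]
  by_cases ha : a ∈ M.act s
  · rcases (M.P_nonneg s a t).eq_or_lt with hP | hP
    · simp [← hP]
    · simp only [ha, hP, true_and]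
      rw [mul_ite, mul_zero]
  · simp [ha, π.toFun_eq_zero_of_notMem ha]

theorem histMass_true (π : Strategy M) (s : S) (n : ℕ) :
    histMass π (fun _ _ => True) s n = 1 := by
  induction n generalizing π s with
  | zero => simp [histMass, isHist, prHist, prFrom]
  | succ n ih =>
    simp only [histMass_succ π (Φ := fun _ _ => True) (fun _ _ _ => Iff.rfl), ih, mul_one]
    exact π.sum_sum_mul_P s

end Mass

section SatProb

open Filter Topology

variable {M : MDP S A} {U F : Set S}

theorem satProbN_succ (π : Strategy M) {s : S} (hs : s ∉ U ∪ F) (n : ℕ) :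
    satProbN M π.toFun U F s (n + 1) =
      ∑ a, ∑ t, π.toFun s [] a * M.P s a t * satProbN M (π.shift s a).toFun U F t n :=
  histMass_succ π (fun a t l => satRA_cons hs t a l) n

theorem satProbN_of_mem_F (π : Strategy M) {s : S} (hs : s ∈ F) (n : ℕ) :
    satProbN M π.toFun U F s n = 1 := by
  rw [← histMass_true π s n]
  exact Finset.sum_congr rfl fun f _ => by simp only [satRA_of_mem_F hs, and_true]

theorem satProbN_of_mem_U (π : Strategy M) {s : S} (hU : s ∈ U) (hF : s ∉ F) (n : ℕ) :
    satProbN M π.toFun U F s n = 0 :=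
  Finset.sum_eq_zero fun _ _ => if_neg fun h => not_satRA_of_mem_U hU hF _ h.2

theorem satProbN_zero_of_notMem_F (π : Strategy M) {s : S} (hs : s ∉ F) :
    satProbN M π.toFun U F s 0 = 0 :=
  Finset.sum_eq_zero fun _ _ => if_neg fun h => not_satRA_nil hs (List.ofFn_zero ▸ h.2)

theorem satProbN_nonneg (π : Strategy M) (s : S) (n : ℕ) : 0 ≤ satProbN M π.toFun U F s n :=
  Finset.sum_nonneg fun _ _ => by
    split_ifs
    exacts [prFrom_nonneg π s _ [], le_rfl]

theorem satProbN_le_one (π : Strategy M) (s : S) (n : ℕ) : satProbN M π.toFun U F s n ≤ 1 := by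
  rw [← histMass_true π s n]
  refine Finset.sum_le_sum fun f _ => ?_
  split_ifs with h h'
  exacts [le_rfl, absurd ⟨h.1, trivial⟩ h', prFrom_nonneg π s _ [], le_rfl]

theorem satProbN_le_succ (π : Strategy M) (s : S) (n : ℕ) :
    satProbN M π.toFun U F s n ≤ satProbN M π.toFun U F s (n + 1) := by
  induction n generalizing π s with
  | zero =>
    by_cases hF : s ∈ F
    · rw [satProbN_of_mem_F π hF, satProbN_of_mem_F π hF]
    · rw [satProbN_zero_of_notMem_F π hF]
      exact satProbN_nonneg π s 1
  | succ n ih =>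
    by_cases hF : s ∈ F
    · rw [satProbN_of_mem_F π hF, satProbN_of_mem_F π hF]
    by_cases hU : s ∈ U
    · rw [satProbN_of_mem_U π hU hF, satProbN_of_mem_U π hU hF]
    have hs : s ∉ U ∪ F := fun h => h.elim hU hF
    rw [satProbN_succ π hs, satProbN_succ π hs]
    gcongr with a _ t _
    · exact mul_nonneg (π.nonneg s [] a) (M.P_nonneg s a t)
    · exact ih _ t

theorem tendsto_satProbN (π : Strategy M) (s : S) :
    Tendsto (satProbN M π.toFun U F s) atTop (𝓝 (prSat M π.toFun U F s)) :=
  tendsto_atTop_ciSup (monotone_nat_of_le_succ (satProbN_le_succ π s))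
    ⟨1, Set.forall_mem_range.mpr (satProbN_le_one π s)⟩

theorem prSat_le_one (π : Strategy M) (s : S) : prSat M π.toFun U F s ≤ 1 :=
  ciSup_le (satProbN_le_one π s)

theorem prSat_of_mem_F (π : Strategy M) {s : S} (hs : s ∈ F) : prSat M π.toFun U F s = 1 := by
  simp only [prSat, satProbN_of_mem_F π hs, ciSup_const]

theorem prSat_of_mem_U (π : Strategy M) {s : S} (hU : s ∈ U) (hF : s ∉ F) :
    prSat M π.toFun U F s = 0 := by
  simp only [prSat, satProbN_of_mem_U π hU hF, ciSup_const]

theorem prSat_eq_sum (π : Strategy M) {s : S} (hs : s ∉ U ∪ F) :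
    prSat M π.toFun U F s =
      ∑ a, ∑ t, π.toFun s [] a * M.P s a t * prSat M (π.shift s a).toFun U F t := by
  refine tendsto_nhds_unique ((tendsto_add_atTop_iff_nat 1).mpr (tendsto_satProbN π s)) ?_
  simp only [satProbN_succ π hs]
  exact tendsto_finsetSum _ fun a _ => tendsto_finsetSum _ fun t _ =>
    (tendsto_satProbN _ t).const_mul _

theorem eq_one_of_sum_mul_eq_one {ι : Type*} [Fintype ι] {w x : ι → ℝ} (hw : ∀ i, 0 ≤ w i)
    (hw_sum : ∑ i, w i = 1) (hx : ∀ i, x i ≤ 1) (h : ∑ i, w i * x i = 1) {i : ι}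
    (hi : 0 < w i) : x i = 1 := by
  have hzero : ∑ j, w j * (1 - x j) = 0 := by
    simp only [mul_sub, mul_one, Finset.sum_sub_distrib, hw_sum, h, sub_self]
  have hterm := (Finset.sum_eq_zero_iff_of_nonneg fun j _ =>
    mul_nonneg (hw j) (sub_nonneg.mpr (hx j))).mp hzero i (Finset.mem_univ i)
  linarith [(mul_eq_zero.mp hterm).resolve_left hi.ne']

theorem prSat_shift_eq_one (π : Strategy M) {s : S} (hs : s ∉ U ∪ F)
    (h : prSat M π.toFun U F s = 1) {a : A} {t : S} (hw : 0 < π.toFun s [] a * M.P s a t) :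
    prSat M (π.shift s a).toFun U F t = 1 := by
  rw [prSat_eq_sum π hs, ← Fintype.sum_prod_type'] at h
  have hw_sum := π.sum_sum_mul_P s
  rw [← Fintype.sum_prod_type'] at hw_sum
  exact eq_one_of_sum_mul_eq_one (w := fun p : A × S => π.toFun s [] p.1 * M.P s p.1 p.2)
    (x := fun p => prSat M (π.shift s p.1).toFun U F p.2)
    (fun p => mul_nonneg (π.nonneg _ _ _) (M.P_nonneg _ _ _)) hw_sum
    (fun p => prSat_le_one _ _) h (i := (a, t)) hw

end SatProb

section Attractor

variable (M : MDP S A)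

/-- The levels of the positive attractor of `F` inside `W`. -/
def attr (W F : Set S) : ℕ → Set S
  | 0 => W ∩ F
  | n + 1 => attr W F n ∪
      {s | s ∈ W ∧ ∃ a ∈ M.act s, post M s a ⊆ W ∧ (post M s a ∩ attr W F n).Nonempty}

/-- `0` outside the attractor, as `sInf ∅ = 0`. -/
noncomputable def attrRank (W F : Set S) (s : S) : ℕ :=
  sInf {n | s ∈ attr M W F n}

variable {M}

theorem attr_subset (W F : Set S) : ∀ n, attr M W F n ⊆ W
  | 0 => Set.inter_subset_left
  | n + 1 => Set.union_subset (attr_subset W F n) fun _ hs => hs.1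

theorem notMem_of_notMem_iUnion_attr {W F : Set S} {s : S} (hs : s ∉ ⋃ n, attr M W F n)
    (hsW : s ∈ W) : s ∉ F :=
  fun hF => hs (Set.mem_iUnion.mpr ⟨0, hsW, hF⟩)

theorem rankWitness_attrRank {U W F : Set S} (hWU : W ∩ U = ∅)
    (hW : W ⊆ ⋃ n, attr M W F n) : rankWitness M U F W (attrRank M W F) := by
  refine ⟨hWU, fun s ⟨hsW, hsF⟩ => ?_⟩
  obtain ⟨n, hn⟩ := Set.mem_iUnion.mp (hW hsW)
  have hrank : s ∈ attr M W F (attrRank M W F s) :=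
    Nat.sInf_mem (s := {n | s ∈ attr M W F n}) ⟨n, hn⟩
  have hleast : ∀ m, s ∈ attr M W F m → attrRank M W F s ≤ m := fun m hm => Nat.sInf_le hm
  rcases hk : attrRank M W F s with _ | k
  · exact absurd (hk ▸ hrank).2 hsF
  rw [hk] at hrank hleast
  obtain hs | ⟨-, a, ha, hpost, u, hu, hua⟩ := hrank
  · exact absurd (hleast k hs) (by omega)
  have hur : attrRank M W F u ≤ k := Nat.sInf_le hua
  exact ⟨a, ha, hpost, u, hu, attr_subset W F k hua, by omega⟩

end Attractor

section AlmostSureWinning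

variable {M : MDP S A} {U F : Set S}

theorem ASW_inter_eq_empty (hUF : Disjoint U F) : ASW M U F ∩ U = ∅ :=
  Set.eq_empty_of_forall_notMem fun _ ⟨⟨π, hπ⟩, hU⟩ => by
    rw [prSat_of_mem_U π hU (hUF.notMem_of_mem_left hU)] at hπ
    exact zero_ne_one hπ

theorem post_subset_ASW (π : Strategy M) {s : S} (hs : s ∉ U ∪ F)
    (h : prSat M π.toFun U F s = 1) {a : A} (ha : 0 < π.toFun s [] a) :
    post M s a ⊆ ASW M U F :=
  fun _ ht => ⟨π.shift s a, prSat_shift_eq_one π hs h (mul_pos ha ht)⟩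

theorem satProbN_eq_zero_of_notMem_iUnion_attr (π : Strategy M) {s : S}
    (h : prSat M π.toFun U F s = 1) (hs : s ∉ ⋃ m, attr M (ASW M U F) F m) (n : ℕ) :
    satProbN M π.toFun U F s n = 0 := by
  induction n generalizing π s with
  | zero => exact satProbN_zero_of_notMem_F π (notMem_of_notMem_iUnion_attr hs ⟨π, h⟩)
  | succ n ih =>
    have hsF := notMem_of_notMem_iUnion_attr hs ⟨π, h⟩
    have hsU : s ∉ U := fun hU => by
      rw [prSat_of_mem_U π hU hsF] at h
      exact zero_ne_one h
    have hsUF : s ∉ U ∪ F := fun h => h.elim hsU hsF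
    rw [satProbN_succ π hsUF]
    refine Finset.sum_eq_zero fun a _ => Finset.sum_eq_zero fun t _ => ?_
    rcases (π.nonneg s [] a).eq_or_lt with ha | ha
    · rw [← ha, zero_mul, zero_mul]
    rcases (M.P_nonneg s a t).eq_or_lt with ht | ht
    · rw [← ht, mul_zero, zero_mul]
    have htA : t ∉ ⋃ m, attr M (ASW M U F) F m := fun htA => by
      obtain ⟨m, hm⟩ := Set.mem_iUnion.mp htA
      exact hs (Set.mem_iUnion.mpr ⟨m + 1, Or.inr
        ⟨⟨π, h⟩, a, π.support_mem s [] a ha, post_subset_ASW π hsUF h ha, t, ht, hm⟩⟩)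
    rw [ih _ (prSat_shift_eq_one π hsUF h (mul_pos ha ht)) htA, mul_zero]

theorem ASW_subset_iUnion_attr : ASW M U F ⊆ ⋃ n, attr M (ASW M U F) F n := by
  rintro s ⟨π, h⟩
  by_contra hs
  have hzero : prSat M π.toFun U F s = 0 := by
    simp only [prSat, satProbN_eq_zero_of_notMem_iUnion_attr π h hs, ciSup_const]
  exact zero_ne_one (hzero.symm.trans h)

end AlmostSureWinning

section RankingWitness

/-- A discrete minimum principle: a minimizer of `Q` on `W` of least rank cannot lie outside `F`,
since `Q` is strictly larger at its successor of lower rank. -/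
theorem exists_mem_inter_forall_le_of_eq_sum {S : Type} [Fintype S] {W F : Set S} {s : S}
    (hs : s ∈ W) {r : S → ℕ} {Q : S → ℝ} {p : S → S → ℝ} (hp : ∀ t u, 0 ≤ p t u)
    (hp_sum : ∀ t ∈ W \ F, ∑ u, p t u = 1) (hp_supp : ∀ t ∈ W \ F, ∀ u, 0 < p t u → u ∈ W)
    (hdesc : ∀ t ∈ W \ F, ∃ u, 0 < p t u ∧ r u < r t)
    (hQ : ∀ t ∈ W \ F, Q t = ∑ u, p t u * Q u) :
    ∃ f ∈ W ∩ F, ∀ t ∈ W, Q f ≤ Q t := by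
  obtain ⟨t₀, ht₀, hmin⟩ := W.exists_min_image Q W.toFinite ⟨s, hs⟩
  obtain ⟨f, ⟨hfW, hQf⟩, hfr⟩ :=
    {t ∈ W | Q t = Q t₀}.exists_min_image r (Set.toFinite _) ⟨t₀, ht₀, rfl⟩
  refine ⟨f, ⟨hfW, ?_⟩, fun t ht => hQf ▸ hmin t ht⟩
  by_contra hfF
  obtain ⟨u, hu, hur⟩ := hdesc f ⟨hfW, hfF⟩
  have hlt : Q f < Q u := lt_of_le_of_ne (hQf ▸ hmin u (hp_supp f ⟨hfW, hfF⟩ u hu))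
    fun h => (hfr u ⟨hp_supp f ⟨hfW, hfF⟩ u hu, h ▸ hQf⟩).not_gt hur
  have hpos : 0 < ∑ v, p f v * (Q v - Q f) := by
    refine Finset.sum_pos' (fun v _ => ?_) ⟨u, Finset.mem_univ u, mul_pos hu (sub_pos.mpr hlt)⟩
    rcases (hp f v).eq_or_lt with hv | hv
    · rw [← hv, zero_mul]
    · exact mul_nonneg hv.le (sub_nonneg.mpr (hQf ▸ hmin v (hp_supp f ⟨hfW, hfF⟩ v hv)))
  have hzero : ∑ v, p f v * (Q v - Q f) = 0 := by
    simp only [mul_sub, Finset.sum_sub_distrib, ← Finset.sum_mul, hp_sum f ⟨hfW, hfF⟩,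
      ← hQ f ⟨hfW, hfF⟩, one_mul, sub_self]
  exact hpos.ne' hzero

variable {M : MDP S A} {U F : Set S}

noncomputable def MarkovStrategy.ofChoice (c : S → A) (hc : ∀ s, c s ∈ M.act s) :
    MarkovStrategy M where
  toFun s a := if a = c s then 1 else 0
  nonneg s a := by split_ifs <;> norm_num
  sum_one s := by simp
  support_mem s a h := by
    split_ifs at h with ha
    · exact ha ▸ hc s
    · exact absurd h (lt_irrefl 0)

theorem MarkovStrategy.strat_shift (σ : MarkovStrategy M) (s : S) (a : A) :
    (σ.strat.shift s a).toFun = σ.strat.toFun :=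
  funext fun t => funext fun l => congrArg σ.toFun (lastState_cons s t a l)

theorem prSat_ofChoice_eq_sum (c : S → A) (hc : ∀ s, c s ∈ M.act s) {s : S} (hs : s ∉ U ∪ F) :
    prSat M (MarkovStrategy.ofChoice c hc).strat.toFun U F s =
      ∑ t, M.P s (c s) t * prSat M (MarkovStrategy.ofChoice c hc).strat.toFun U F t := by
  have hπ : ∀ a, (MarkovStrategy.ofChoice c hc).strat.toFun s [] a = if a = c s then 1 else 0 :=
    fun _ => rfl
  rw [prSat_eq_sum _ hs, Finset.sum_eq_single (c s) (fun b _ hb => by simp [hπ, hb]) (by simp)]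
  simp [hπ, MarkovStrategy.strat_shift]

theorem mem_ASW_of_rankWitness {W : Set S} {r : S → ℕ} (hW : rankWitness M U F W r) {s : S}
    (hs : s ∈ W) : s ∈ ASW M U F := by
  have hchoice : ∀ t, ∃ a ∈ M.act t, t ∈ W \ F →
      post M t a ⊆ W ∧ (post M t a ∩ {u ∈ W | r u < r t}).Nonempty := fun t => by
    by_cases ht : t ∈ W \ F
    · obtain ⟨a, ha, hpost⟩ := hW.2 t ht
      exact ⟨a, ha, fun _ => hpost⟩
    · obtain ⟨a, ha⟩ := M.act_nonempty t
      exact ⟨a, ha, fun h => absurd h ht⟩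
  choose c hc hcW using hchoice
  set π := (MarkovStrategy.ofChoice c hc).strat
  have hnotUF : ∀ t ∈ W \ F, t ∉ U ∪ F := fun t ⟨htW, htF⟩ h =>
    h.elim (fun htU => hW.1.subset ⟨htW, htU⟩) htF
  obtain ⟨f, ⟨-, hfF⟩, hmin⟩ := exists_mem_inter_forall_le_of_eq_sum hs (r := r)
    (Q := prSat M π.toFun U F) (p := fun t => M.P t (c t)) (fun t => M.P_nonneg t (c t))
    (fun t _ => M.P_sum_one t (c t) (hc t)) (fun t ht u hu => (hcW t ht).1 hu)
    (fun t ht => by obtain ⟨u, hu, -, hur⟩ := (hcW t ht).2; exact ⟨u, hu, hur⟩)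
    (fun t ht => prSat_ofChoice_eq_sum c hc (hnotUF t ht))
  refine ⟨π, le_antisymm (prSat_le_one π s) ?_⟩
  calc 1 = prSat M π.toFun U F f := (prSat_of_mem_F π hfF).symm
    _ ≤ prSat M π.toFun U F s := hmin s hs

end RankingWitness

/-- `s ∈ ASW(¬U 𝖴 F)` iff there is a ranking witness `(W, r)` for
`¬U 𝖴 F` with `s ∈ W`. -/
theorem mem_ASW_iff_rankWitness (M : MDP S A) (U F : Set S) (hUF : Disjoint U F)
    (s : S) :
    s ∈ ASW M U F ↔ ∃ (W : Set S) (r : S → ℕ), rankWitness M U F W r ∧ s ∈ W :=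
  ⟨fun hs => ⟨ASW M U F, attrRank M (ASW M U F) F,
      rankWitness_attrRank (ASW_inter_eq_empty hUF) ASW_subset_iUnion_attr, hs⟩,
    fun ⟨_, _, hW, hsW⟩ => mem_ASW_of_rankWitness hW hsW⟩
end

section
/- Consider a finite MDP M with defender state-observation function DObs_S and user objective φ0 = ¬U0 𝖴 F0, and the action-visible belief update Update_v. Let s0 a0 s1 … sn be any sequence with ai ∈ A(si) and P(s(i+1)|si,ai) > 0 for all i < n, and define B0 = DObs_S(s0) and B(i+1) = Update_v(Bi, ai, s(i+1)). If Bn ≠ ∅, then for every t ∈ Bn there exist states s'0 ∈ B0, …, s'n ∈ Bn with s'n = t such that ai ∈ Allowed0(s'i) and P(s'(i+1)|s'i,ai) > 0 for all i < n; i.e., every element of the defender's belief is reached from an initial observation-equivalent state by a path that uses only user-permissible actions matching the observed action sequence. -/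
open scoped BigOperators Classical

variable {S A : Type} [Fintype S] [Fintype A]

/-! The belief `B n` is the forward image of `DObs_S(s0)` under the one-step relations
"`a i` is allowed at the source and leads with positive probability to a state observed like
`s (i+1)`". Any element of a forward image along a list of relations is traced back one step
at a time, and peeling off the first relation keeps every intermediate state in the
intermediate image. -/

section ReachableAlong

variable {ι α : Type*}

def reachableAlong (step : ι → α → α → Prop) (B : Set α) (l : List ι) : Set α :=
  l.foldl (fun B x => {t | ∃ s ∈ B, step x s t}) B

theorem exists_path_of_mem_reachableAlong (step : ι → α → α → Prop) (B : Set α) (l : List ι)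
    {t : α} (ht : t ∈ reachableAlong step B l) :
    ∃ g : ℕ → α, g l.length = t ∧
      (∀ i ≤ l.length, g i ∈ reachableAlong step B (l.take i)) ∧
      ∀ i : Fin l.length, step l[i] (g i) (g (i + 1)) := by
  induction l generalizing B with
  | nil => exact ⟨fun _ => t, rfl, by simpa [reachableAlong] using ht, nofun⟩
  | cons x l ih =>
    obtain ⟨g, hg_last, hg_mem, hg_step⟩ := ih _ ht
    obtain ⟨s, hsB, hs_step⟩ : g 0 ∈ {t | ∃ s ∈ B, step x s t} := hg_mem 0 (Nat.zero_le _)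
    refine ⟨fun | 0 => s | i + 1 => g i, hg_last, ?_, ?_⟩
    · rintro (_ | i) hi
      · exact hsB
      · exact hg_mem i (Nat.le_of_succ_le_succ hi)
    · intro i
      induction i using Fin.cases with
      | zero => exact hs_step
      | succ i => exact hg_step i

end ReachableAlong

def visibleStep (M : MDP S A) (O : ObsFun M) (U0 F0 : Set S) (p : A × S) (so s' : S) :
    Prop :=
  p.1 ∈ allowed M U0 F0 so ∧ s' ∈ post M so p.1 ∧ O.obs s' = O.obs p.2

theorem beliefV_eq_reachableAlong (M : MDP S A) (O : ObsFun M) (U0 F0 : Set S) (s0 : S)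
    (l : List (A × S)) :
    beliefV M O U0 F0 s0 l = reachableAlong (visibleStep M O U0 F0) (O.obs s0) l :=
  rfl

theorem beliefV_backward_path_general (M : MDP S A) (O : ObsFun M) (U0 F0 : Set S)
    (s0 : S) (l : List (A × S)) :
    ∀ t ∈ beliefV M O U0 F0 s0 l, ∃ g : ℕ → S, g l.length = t ∧
      (∀ i ≤ l.length, g i ∈ beliefV M O U0 F0 s0 (l.take i)) ∧
      ∀ i : Fin l.length, (l.get i).1 ∈ allowed M U0 F0 (g i.val) ∧
        0 < M.P (g i.val) (l.get i).1 (g (i.val + 1)) := by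
  intro t ht
  rw [beliefV_eq_reachableAlong] at ht
  obtain ⟨g, hg_last, hg_mem, hg_step⟩ := exists_path_of_mem_reachableAlong _ _ _ ht
  exact ⟨g, hg_last, hg_mem, fun i => ⟨(hg_step i).1, (hg_step i).2.1⟩⟩

/-- every element of the action-visible defender's belief is the endpoint
of a path from an initial observation-equivalent state that uses only user-permissible
actions matching the observed action sequence. -/
theorem beliefV_backward_path (M : MDP S A) (O : ObsFun M) (U0 F0 : Set S)
    (h0 : Disjoint U0 F0) (s0 : S) (l : List (A × S)) (hl : isHist M s0 l)
    (hBn : beliefV M O U0 F0 s0 l ≠ ∅) :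
    ∀ t ∈ beliefV M O U0 F0 s0 l, ∃ g : ℕ → S, g l.length = t ∧
      (∀ i ≤ l.length, g i ∈ beliefV M O U0 F0 s0 (l.take i)) ∧
      ∀ i : Fin l.length, (l.get i).1 ∈ allowed M U0 F0 (g i.val) ∧
        0 < M.P (g i.val) (l.get i).1 (g (i.val + 1)) :=
  beliefV_backward_path_general M O U0 F0 s0 l
end

section
/- Consider a finite MDP M with defender state-observation function DObs_S and user objective φ0 = ¬U0 𝖴 F0, and the action-visible belief update Update_v. Let s0 a0 s1 … sn be any sequence with ai ∈ A(si) and P(s(i+1)|si,ai) > 0 for all i < n, and define B0 = DObs_S(s0) and B(i+1) = Update_v(Bi, ai, s(i+1)). Then Bi ⊆ DObs_S(si) for all 0 ≤ i ≤ n, and Bi ⊆ ASW(φ0) for all 1 ≤ i ≤ n; i.e., the defender's belief always consists of states observation-equivalent to the true state, and after the first update it consists only of states in the user's almost-sure winning region. -/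
open scoped BigOperators Classical

variable {S A : Type} [Fintype S] [Fintype A]

section BeliefV

variable (M : MDP S A) (O : ObsFun M) (U0 F0 : Set S)

lemma updateV_subset_obs (B : Set S) (a : A) (s'' : S) :
    updateV M O U0 F0 B a s'' ⊆ O.obs s'' := by
  rintro s' ⟨-, -, -, -, hobs⟩
  exact hobs ▸ O.mem_self s'

lemma updateV_subset_ASW (B : Set S) (a : A) (s'' : S) :
    updateV M O U0 F0 B a s'' ⊆ ASW M U0 F0 := by
  rintro s' ⟨_, -, ⟨-, -, hpost⟩, hs', -⟩
  exact hpost hs'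

lemma beliefV_take_succ (s0 : S) {l : List (A × S)} {i : ℕ} (hi : i < l.length) :
    beliefV M O U0 F0 s0 (l.take (i + 1)) =
      updateV M O U0 F0 (beliefV M O U0 F0 s0 (l.take i)) l[i].1 l[i].2 := by
  rw [beliefV, List.take_add_one, List.getElem?_eq_getElem hi, Option.toList_some,
    List.foldl_append, List.foldl_cons, List.foldl_nil, beliefV]

end BeliefV

theorem beliefV_subset_obs_and_ASW_general (M : MDP S A) (O : ObsFun M) (U0 F0 : Set S)
    (s0 : S) (l : List (A × S)) :
    (∀ i ≤ l.length, beliefV M O U0 F0 s0 (l.take i) ⊆ O.obs (stateAt s0 l i)) ∧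
    (∀ i, 1 ≤ i → i ≤ l.length →
      beliefV M O U0 F0 s0 (l.take i) ⊆ ASW M U0 F0) := by
  constructor
  · rintro (_ | i) hi
    · exact Set.Subset.rfl
    · have hstate : stateAt s0 l (i + 1) = l[i].2 := by
        simp [stateAt, List.getElem?_eq_getElem hi]
      rw [beliefV_take_succ M O U0 F0 s0 hi, hstate]
      exact updateV_subset_obs M O U0 F0 _ _ _
  · rintro (_ | i) hpos hi
    · omega
    · rw [beliefV_take_succ M O U0 F0 s0 hi]
      exact updateV_subset_ASW M O U0 F0 _ _ _

/-- along any history, the action-visible defender's belief consists of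
states observation-equivalent to the true state, and after the first update it consists
only of states of the user's almost-sure winning region. -/
theorem beliefV_subset_obs_and_ASW (M : MDP S A) (O : ObsFun M) (U0 F0 : Set S)
    (h0 : Disjoint U0 F0) (s0 : S) (l : List (A × S)) (hl : isHist M s0 l) :
    (∀ i ≤ l.length, beliefV M O U0 F0 s0 (l.take i) ⊆ O.obs (stateAt s0 l i)) ∧
    (∀ i, 1 ≤ i → i ≤ l.length →
      beliefV M O U0 F0 s0 (l.take i) ⊆ ASW M U0 F0) :=
  beliefV_subset_obs_and_ASW_general M O U0 F0 s0 l
end
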